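/- arXiv:math/0201096 — 4 statements merged into one kernel-verified Lean document; each statement's English description precedes it below -/
import Mathlib

section
/- Let L₀, R₀, R_π > 0 and let M be the matrix product M = (1/(R₀R_π)) · [[L₀-R_π, L₀],[L₀-(R₀+R_π), L₀-R₀]] · [[L₀-R₀, L₀],[L₀-(R₀+R_π), L₀-R_π]]. If L₀ - (R₀ + R_π) > 0, or if L₀ - (R₀ + R_π) < 0 and (L₀ - R₀)(L₀ - R_π) < 0, then |trace M| > 2 (so M is hyperbolic: it has two distinct real eigenvalues λ, 1/λ with |λ| > 1). -/
theorem stmt4 (L₀ R₀ Rπ : ℝ) (hL : 0 < L₀) (hR₀ : 0 < R₀) (hRπ : 0 < Rπ)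
    (M : Matrix (Fin 2) (Fin 2) ℝ)
    (hM : M = (1 / (R₀ * Rπ)) •
      (!![L₀ - Rπ, L₀; L₀ - (R₀ + Rπ), L₀ - R₀] *
       !![L₀ - R₀, L₀; L₀ - (R₀ + Rπ), L₀ - Rπ]))
    (hcond : L₀ - (R₀ + Rπ) > 0 ∨
      (L₀ - (R₀ + Rπ) < 0 ∧ (L₀ - R₀) * (L₀ - Rπ) < 0)) :
    |M.trace| > 2 := by
  have hRR : (0:ℝ) < R₀ * Rπ := mul_pos hR₀ hRπ
  have ht : M.trace = 2 + 4 * L₀ * (L₀ - R₀ - Rπ) / (R₀ * Rπ) := by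
    subst hM
    simp [Matrix.trace_fin_two, Matrix.mul_apply, Fin.sum_univ_two]
    field_simp
    ring
  rcases hcond with h | ⟨h1, h2⟩
  · have : M.trace > 2 := by
      rw [ht]
      have h4 : 0 < 4 * L₀ * (L₀ - R₀ - Rπ) := by nlinarith
      have : 0 < 4 * L₀ * (L₀ - R₀ - Rπ) / (R₀ * Rπ) := div_pos h4 hRR
      linarith
    exact lt_of_lt_of_le this (le_abs_self _)
  · have : M.trace < -2 := by
      rw [ht]
      have h4 : 4 * L₀ * (L₀ - R₀ - Rπ) / (R₀ * Rπ) < -4 := by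
        rw [div_lt_iff₀ hRR]; nlinarith
      linarith
    have h3 : 2 < -M.trace := by linarith
    exact lt_of_lt_of_le h3 (neg_le_abs _)
end

section
/- With the setup above, the radius of curvature of β at parameter φ equals R_β(φ) = ((R_α - λ)² + (λ')²)^{3/2} / ((R_α - λ)(R_α - λ + λ'') - λ'(R_α' - 2λ')), evaluated at φ, whenever the denominator is positive. -/
open Real

noncomputable def tau (φ : ℝ) : EuclideanSpace ℝ (Fin 2) := !₂[Real.cos φ, Real.sin φ]

noncomputable def eta (φ : ℝ) : EuclideanSpace ℝ (Fin 2) := !₂[-Real.sin φ, Real.cos φ]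

/-- planar cross product u × v = u₁v₂ - u₂v₁ -/
noncomputable def cross (u v : EuclideanSpace ℝ (Fin 2)) : ℝ := u 0 * v 1 - u 1 * v 0

/-!
In the rotating frame `(τ, η)` one has `τ' = η` and `η' = -τ`, so the derivative of
`f τ + g η` is `(f' - g) τ + (f + g') η`. Applying this twice gives
`β' = (R_α - λ) τ + λ' η` and `β'' = (R_α' - 2λ') τ + (R_α - λ + λ'') η`. Since `(τ, η)` is a
positively oriented orthonormal frame, `‖a τ + b η‖ = √(a² + b²)` and
`(a τ + b η) × (c τ + d η) = a d - b c`, which yields the formula.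
-/

theorem hasDerivAt_piLp {𝕜 ι : Type*} [NontriviallyNormedField 𝕜] [Fintype ι]
    {E : ι → Type*} [∀ i, NormedAddCommGroup (E i)] [∀ i, NormedSpace 𝕜 (E i)]
    {p : ENNReal} [Fact (1 ≤ p)] {f : 𝕜 → PiLp p E} {f' : PiLp p E} {x : 𝕜} :
    HasDerivAt f f' x ↔ ∀ i, HasDerivAt (fun x => f x i) (f' i) x := by
  refine ⟨fun h => ?_, fun h => ?_⟩
  · exact hasDerivAt_pi.1 ((PiLp.hasFDerivAt_ofLp p (f x)).comp_hasDerivAt x h)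
  · exact (PiLp.hasFDerivAt_toLp p _).comp_hasDerivAt x (hasDerivAt_pi.2 h)

theorem hasDerivAt_tau (φ : ℝ) : HasDerivAt tau (eta φ) φ := by
  refine hasDerivAt_piLp.2 fun i => ?_
  fin_cases i
  · simpa [tau, eta] using hasDerivAt_cos φ
  · simpa [tau, eta] using hasDerivAt_sin φ

theorem hasDerivAt_eta (φ : ℝ) : HasDerivAt eta (-tau φ) φ := by
  refine hasDerivAt_piLp.2 fun i => ?_
  fin_cases i
  · simp only [tau, eta, Fin.zero_eta, PiLp.toLp_apply, Matrix.cons_val_zero, PiLp.neg_apply]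
    exact (hasDerivAt_sin φ).neg
  · simpa [tau, eta] using hasDerivAt_cos φ

theorem HasDerivAt.smul_tau_add_smul_eta {f g : ℝ → ℝ} {f' g' φ : ℝ}
    (hf : HasDerivAt f f' φ) (hg : HasDerivAt g g' φ) :
    HasDerivAt (fun ψ => f ψ • tau ψ + g ψ • eta ψ)
      ((f' - g φ) • tau φ + (f φ + g') • eta φ) φ := by
  refine ((hf.smul (hasDerivAt_tau φ)).add (hg.smul (hasDerivAt_eta φ))).congr_deriv ?_
  module

theorem norm_smul_tau_add_smul_eta (a b φ : ℝ) :
    ‖a • tau φ + b • eta φ‖ = √(a ^ 2 + b ^ 2) := by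
  rw [EuclideanSpace.norm_eq]
  congr 1
  simp only [tau, eta, Fin.sum_univ_two, PiLp.add_apply, PiLp.smul_apply, smul_eq_mul,
    Matrix.cons_val_zero, Matrix.cons_val_one, Real.norm_eq_abs, sq_abs]
  linear_combination (a ^ 2 + b ^ 2) * sin_sq_add_cos_sq φ

theorem cross_smul_tau_add_smul_eta (a b c d φ : ℝ) :
    cross (a • tau φ + b • eta φ) (c • tau φ + d • eta φ) = a * d - b * c := by
  simp only [cross, tau, eta, PiLp.add_apply, PiLp.smul_apply, smul_eq_mul,
    Matrix.cons_val_zero, Matrix.cons_val_one]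
  linear_combination (a * d - b * c) * sin_sq_add_cos_sq φ

theorem norm_pow_three_div_cross_smul_tau_add_smul_eta (a b c d φ : ℝ) :
    ‖a • tau φ + b • eta φ‖ ^ 3 / cross (a • tau φ + b • eta φ) (c • tau φ + d • eta φ) =
      (a ^ 2 + b ^ 2) ^ ((3 : ℝ) / 2) / (a * d - b * c) := by
  rw [norm_smul_tau_add_smul_eta, cross_smul_tau_add_smul_eta, sqrt_eq_rpow,
    ← rpow_natCast, ← rpow_mul (by positivity)]
  norm_num

theorem deriv_parallel_curve {α β : ℝ → EuclideanSpace ℝ (Fin 2)} {Rα lam : ℝ → ℝ}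
    (hα : Differentiable ℝ α) (hlam : Differentiable ℝ lam)
    (hderiv : ∀ φ, deriv α φ = Rα φ • tau φ) (hβ : ∀ φ, β φ = α φ + lam φ • eta φ) :
    deriv β = fun φ => (Rα φ - lam φ) • tau φ + deriv lam φ • eta φ := by
  funext φ
  have hα' : HasDerivAt α (Rα φ • tau φ) φ := hderiv φ ▸ (hα φ).hasDerivAt
  rw [funext hβ]
  refine ((hα'.add ((hlam φ).hasDerivAt.smul (hasDerivAt_eta φ))).congr_deriv ?_).deriv
  module

theorem stmt10_general (α : ℝ → EuclideanSpace ℝ (Fin 2)) (Rα : ℝ → ℝ) (lam : ℝ → ℝ)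
    (hα : ContDiff ℝ 4 α) (hlam : ContDiff ℝ 4 lam)
    (hRα : ContDiff ℝ 2 Rα)
    (hderiv : ∀ φ, deriv α φ = Rα φ • tau φ)
    (β : ℝ → EuclideanSpace ℝ (Fin 2))
    (hβ : ∀ φ, β φ = α φ + lam φ • eta φ)
    (φ : ℝ) :
    ‖deriv β φ‖ ^ 3 / cross (deriv β φ) (deriv (deriv β) φ) =
      ((Rα φ - lam φ) ^ 2 + (deriv lam φ) ^ 2) ^ ((3 : ℝ) / 2) /
        ((Rα φ - lam φ) * (Rα φ - lam φ + deriv (deriv lam) φ)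
          - deriv lam φ * (deriv Rα φ - 2 * deriv lam φ)) := by
  have hlam' : Differentiable ℝ (deriv lam) := (hlam.of_le (by norm_num)).differentiable_deriv_two
  have hβ' := deriv_parallel_curve (hα.differentiable (by norm_num))
    (hlam.differentiable (by norm_num)) hderiv hβ
  have hβ'' : deriv (deriv β) φ =
      (deriv Rα φ - 2 * deriv lam φ) • tau φ + (Rα φ - lam φ + deriv (deriv lam) φ) • eta φ := by
    rw [hβ']
    refine ((((hRα.differentiable (by norm_num) φ).hasDerivAt.sub
      (hlam.differentiable (by norm_num) φ).hasDerivAt).smul_tau_add_smul_eta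
      (hlam' φ).hasDerivAt).congr_deriv ?_).deriv
    rw [Pi.sub_apply]
    module
  rw [hβ'', hβ', norm_pow_three_div_cross_smul_tau_add_smul_eta]

theorem stmt10 (α : ℝ → EuclideanSpace ℝ (Fin 2)) (Rα : ℝ → ℝ) (lam : ℝ → ℝ)
    (hα : ContDiff ℝ 4 α) (hlam : ContDiff ℝ 4 lam)
    (hRα : ContDiff ℝ 2 Rα) (hRpos : ∀ φ, 0 < Rα φ)
    (hderiv : ∀ φ, deriv α φ = Rα φ • tau φ)
    (β : ℝ → EuclideanSpace ℝ (Fin 2))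
    (hβ : ∀ φ, β φ = α φ + lam φ • eta φ)
    (φ : ℝ)
    (hden : 0 < (Rα φ - lam φ) * (Rα φ - lam φ + deriv (deriv lam) φ)
        - deriv lam φ * (deriv Rα φ - 2 * deriv lam φ)) :
    ‖deriv β φ‖ ^ 3 / cross (deriv β φ) (deriv (deriv β) φ) =
      ((Rα φ - lam φ) ^ 2 + (deriv lam φ) ^ 2) ^ ((3 : ℝ) / 2) /
        ((Rα φ - lam φ) * (Rα φ - lam φ + deriv (deriv lam) φ)
          - deriv lam φ * (deriv Rα φ - 2 * deriv lam φ)) :=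
  stmt10_general α Rα lam hα hlam hRα hderiv β hβ φ
end

section
/- Define F : U → ℝ on a neighborhood U of 0 in ℝ⁴ by F(λ₀, λ_π, μ₀, μ_π) = 2·(L₀ - R₀ - λ_π + μ₀Δ₀)(L₀ - R_π - λ₀ + μ_πΔ_π) / ((R₀ - λ₀ - μ₀Δ₀)(R_π - λ_π - μ_πΔ_π)) - 1, where Δ₀ = (R₀-λ₀)/(R₀-λ₀+μ₀) and Δ_π = (R_π-λ_π)/(R_π-λ_π+μ_π), and L₀, R₀, R_π > 0 are constants with L₀ ≠ R₀, L₀ ≠ R_π, L₀ ≠ R₀+R_π. Then F(0,0,0,0) = 2(L₀-R₀)(L₀-R_π)/(R₀R_π) - 1, and the partial derivatives at the origin are: ∂F/∂λ₀ = 2(L₀-R₀)(L₀-R₀-R_π)/(R₀²R_π), ∂F/∂λ_π = 2(L₀-R_π)(L₀-R₀-R_π)/(R_π²R₀), ∂F/∂μ₀ = 2(L₀-R_π)L₀/(R₀²R_π), ∂F/∂μ_π = 2(L₀-R₀)L₀/(R_π²R₀); in particular all four are nonzero. -/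
open Filter

/-
The partial derivatives at the origin are computed on the four coordinate sections. With the
other three variables at `0`, the section in `λ₀` is a Möbius function of the variable. The
section in `μ₀` is even affine near `0`, since for `R₀ + μ₀ ≠ 0` the normal shift satisfies
`R₀ - μ₀ Δ₀ = R₀² / (R₀ + μ₀)` and `L₀ - R₀ + μ₀ Δ₀ = ((L₀ - R₀) R₀ + L₀ μ₀) / (R₀ + μ₀)`.
The `π`-sections follow from the symmetry exchanging the two endpoints of the diameter.
-/

lemma hasDerivAt_div_affine (a b c d : ℝ) {x₀ : ℝ} (h : c * x₀ + d ≠ 0) :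
    HasDerivAt (fun x => (a * x + b) / (c * x + d)) ((a * d - b * c) / (c * x₀ + d) ^ 2) x₀ := by
  refine ((((hasDerivAt_id' x₀).const_mul a).add_const b).div
    (((hasDerivAt_id' x₀).const_mul c).add_const d) h).congr_deriv ?_
  ring

/-- `a₀, aπ, μ₀, μπ` stand for `λ(0), λ(π), λ''(0), λ''(π)`. -/
noncomputable def diameterOrbitCos (L R₀ Rπ a₀ aπ μ₀ μπ : ℝ) : ℝ :=
  2 * (L - R₀ - aπ + μ₀ * ((R₀ - a₀) / (R₀ - a₀ + μ₀)))
    * (L - Rπ - a₀ + μπ * ((Rπ - aπ) / (Rπ - aπ + μπ)))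
    / ((R₀ - a₀ - μ₀ * ((R₀ - a₀) / (R₀ - a₀ + μ₀)))
      * (Rπ - aπ - μπ * ((Rπ - aπ) / (Rπ - aπ + μπ)))) - 1

lemma diameterOrbitCos_comm (L R₀ Rπ a₀ aπ μ₀ μπ : ℝ) :
    diameterOrbitCos L R₀ Rπ a₀ aπ μ₀ μπ = diameterOrbitCos L Rπ R₀ aπ a₀ μπ μ₀ := by
  unfold diameterOrbitCos
  ring

lemma diameterOrbitCos_zero (L R₀ Rπ : ℝ) :
    diameterOrbitCos L R₀ Rπ 0 0 0 0 = 2 * (L - R₀) * (L - Rπ) / (R₀ * Rπ) - 1 := by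
  simp [diameterOrbitCos]

lemma deriv_diameterOrbitCos_wrt_a₀ (L : ℝ) {R₀ Rπ : ℝ} (hR₀ : R₀ ≠ 0) (hRπ : Rπ ≠ 0) :
    deriv (fun x => diameterOrbitCos L R₀ Rπ x 0 0 0) 0
      = 2 * (L - R₀) * (L - R₀ - Rπ) / (R₀ ^ 2 * Rπ) := by
  have hmob := (hasDerivAt_div_affine (-2 * (L - R₀)) (2 * (L - R₀) * (L - Rπ)) (-Rπ) (R₀ * Rπ)
    (x₀ := 0) (by simpa using mul_ne_zero hR₀ hRπ)).sub_const 1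
  refine (hmob.congr_of_eventuallyEq (Eventually.of_forall fun x => ?_)).deriv.trans ?_
  · simp only [diameterOrbitCos, sub_zero, zero_mul, add_zero]
    ring
  · simp only [mul_zero, zero_add]
    field_simp
    ring

lemma deriv_diameterOrbitCos_wrt_μ₀ (L : ℝ) {R₀ Rπ : ℝ} (hR₀ : R₀ ≠ 0) (hRπ : Rπ ≠ 0) :
    deriv (fun x => diameterOrbitCos L R₀ Rπ 0 0 x 0) 0
      = 2 * (L - Rπ) * L / (R₀ ^ 2 * Rπ) := by
  have hmob := (hasDerivAt_div_affine (2 * L * (L - Rπ)) (2 * (L - R₀) * R₀ * (L - Rπ)) 0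
    (R₀ ^ 2 * Rπ) (x₀ := 0) (by simpa using mul_ne_zero (pow_ne_zero 2 hR₀) hRπ)).sub_const 1
  refine (hmob.congr_of_eventuallyEq ?_).deriv.trans ?_
  · filter_upwards [eventually_ne_nhds (neg_ne_zero.mpr hR₀).symm] with x hx
    have hx' : R₀ + x ≠ 0 := fun h => hx (eq_neg_of_add_eq_zero_right h)
    simp only [diameterOrbitCos, sub_zero, zero_mul, add_zero, zero_add]
    have hshift : R₀ - x * (R₀ / (R₀ + x)) = R₀ ^ 2 / (R₀ + x) := by
      field_simp
      ring
    rw [hshift]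
    field_simp
    ring
  · simp only [mul_zero, zero_add]
    field_simp
    ring

theorem stmt15 (L₀ R₀ Rπ : ℝ) (hL : 0 < L₀) (hR₀ : 0 < R₀) (hRπ : 0 < Rπ)
    (h₁ : L₀ ≠ R₀) (h₂ : L₀ ≠ Rπ) (h₃ : L₀ ≠ R₀ + Rπ)
    (F : ℝ → ℝ → ℝ → ℝ → ℝ)
    (hF : ∀ a₀ aπ μ₀ μπ : ℝ,
      F a₀ aπ μ₀ μπ =
        2 * (L₀ - R₀ - aπ + μ₀ * ((R₀ - a₀) / (R₀ - a₀ + μ₀)))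
          * (L₀ - Rπ - a₀ + μπ * ((Rπ - aπ) / (Rπ - aπ + μπ)))
          / ((R₀ - a₀ - μ₀ * ((R₀ - a₀) / (R₀ - a₀ + μ₀)))
            * (Rπ - aπ - μπ * ((Rπ - aπ) / (Rπ - aπ + μπ)))) - 1) :
    F 0 0 0 0 = 2 * (L₀ - R₀) * (L₀ - Rπ) / (R₀ * Rπ) - 1 ∧
    deriv (fun x => F x 0 0 0) 0 = 2 * (L₀ - R₀) * (L₀ - R₀ - Rπ) / (R₀ ^ 2 * Rπ) ∧
    deriv (fun x => F 0 x 0 0) 0 = 2 * (L₀ - Rπ) * (L₀ - R₀ - Rπ) / (Rπ ^ 2 * R₀) ∧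
    deriv (fun x => F 0 0 x 0) 0 = 2 * (L₀ - Rπ) * L₀ / (R₀ ^ 2 * Rπ) ∧
    deriv (fun x => F 0 0 0 x) 0 = 2 * (L₀ - R₀) * L₀ / (Rπ ^ 2 * R₀) ∧
    deriv (fun x => F x 0 0 0) 0 ≠ 0 ∧
    deriv (fun x => F 0 x 0 0) 0 ≠ 0 ∧
    deriv (fun x => F 0 0 x 0) 0 ≠ 0 ∧
    deriv (fun x => F 0 0 0 x) 0 ≠ 0 := by
  obtain rfl : F = diameterOrbitCos L₀ R₀ Rπ := by
    funext a₀ aπ μ₀ μπ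
    exact hF a₀ aπ μ₀ μπ
  have d₁ := deriv_diameterOrbitCos_wrt_a₀ L₀ hR₀.ne' hRπ.ne'
  have d₂ := deriv_diameterOrbitCos_wrt_a₀ L₀ hRπ.ne' hR₀.ne'
  have d₃ := deriv_diameterOrbitCos_wrt_μ₀ L₀ hR₀.ne' hRπ.ne'
  have d₄ := deriv_diameterOrbitCos_wrt_μ₀ L₀ hRπ.ne' hR₀.ne'
  simp only [diameterOrbitCos_comm L₀ Rπ R₀] at d₂ d₄
  rw [show L₀ - Rπ - R₀ = L₀ - R₀ - Rπ by ring] at d₂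
  have hL₀R₀ := sub_ne_zero.mpr h₁
  have hL₀Rπ := sub_ne_zero.mpr h₂
  have hL₀R₀Rπ : L₀ - R₀ - Rπ ≠ 0 := by rwa [sub_sub, sub_ne_zero]
  -- `positivity` proves the `≠ 0` goals from the nonzero factors just named
  refine ⟨diameterOrbitCos_zero L₀ R₀ Rπ, d₁, d₂, d₃, d₄, ?_, ?_, ?_, ?_⟩ <;>
    simp only [d₁, d₂, d₃, d₄] <;> positivity
end

section
/- Let L₀, R₀, R_π > 0 satisfy the elliptic conditions L₀-(R₀+R_π) < 0 and (L₀-R₀)(L₀-R_π) > 0. Since ∂F/∂μ₀(0) = 2(L₀-R_π)L₀/(R₀²R_π) ≠ 0 (F as in the previous statement), for any finite set S ⊂ (-1,1) (e.g. S = {0, cos(2π/3), -1/2} corresponding to resonances) and any ε > 0 there exist (λ₀, λ_π, μ₀, μ_π) with max norm < ε such that F(λ₀, λ_π, μ₀, μ_π) ∉ S and the elliptic conditions still hold for the perturbed data (l₀, r₀, r_π) = (L₀-λ₀-λ_π, R₀-λ₀-μ₀Δ₀, R_π-λ_π-μ_πΔ_π). That is, resonant elliptic diameters can be removed by arbitrarily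 small perturbations of the data. -/
theorem stmt16 (L₀ R₀ Rπ : ℝ) (hL : 0 < L₀) (hR₀ : 0 < R₀) (hRπ : 0 < Rπ)
    (hell₁ : L₀ - (R₀ + Rπ) < 0) (hell₂ : (L₀ - R₀) * (L₀ - Rπ) > 0)
    (F : ℝ → ℝ → ℝ → ℝ → ℝ)
    (hF : ∀ a₀ aπ b₀ bπ : ℝ,
      F a₀ aπ b₀ bπ =
        2 * (L₀ - R₀ - aπ + b₀ * ((R₀ - a₀) / (R₀ - a₀ + b₀)))
          * (L₀ - Rπ - a₀ + bπ * ((Rπ - aπ) / (Rπ - aπ + bπ)))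
          / ((R₀ - a₀ - b₀ * ((R₀ - a₀) / (R₀ - a₀ + b₀)))
            * (Rπ - aπ - bπ * ((Rπ - aπ) / (Rπ - aπ + bπ)))) - 1) :
    ∀ S : Finset ℝ, (∀ s ∈ S, s ∈ Set.Ioo (-1 : ℝ) 1) →
    ∀ ε > 0, ∃ a₀ aπ b₀ bπ : ℝ,
      |a₀| < ε ∧ |aπ| < ε ∧ |b₀| < ε ∧ |bπ| < ε ∧
      F a₀ aπ b₀ bπ ∉ S ∧
      (L₀ - a₀ - aπ) - ((R₀ - a₀ - b₀ * ((R₀ - a₀) / (R₀ - a₀ + b₀)))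
        + (Rπ - aπ - bπ * ((Rπ - aπ) / (Rπ - aπ + bπ)))) < 0 ∧
      ((L₀ - a₀ - aπ) - (R₀ - a₀ - b₀ * ((R₀ - a₀) / (R₀ - a₀ + b₀))))
        * ((L₀ - a₀ - aπ) - (Rπ - aπ - bπ * ((Rπ - aπ) / (Rπ - aπ + bπ)))) > 0 := by
  intro S hS ε hε
  have hLRπ : L₀ - Rπ ≠ 0 := by
    intro h; rw [h, mul_zero] at hell₂; exact lt_irrefl 0 hell₂
  set d : ℝ := if L₀ < R₀ then R₀ - L₀ else 1 with hd
  have hd0 : 0 < d := by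
    rw [hd]; split <;> [linarith; norm_num]
  set δ : ℝ := min ε (min ((R₀ + Rπ) - L₀) d) with hδdef
  have hδ0 : 0 < δ := lt_min hε (lt_min (by linarith) hd0)
  set A : ℝ := 2 * L₀ * (L₀ - Rπ) / (R₀ ^ 2 * Rπ) with hA
  set B : ℝ := 2 * (L₀ - R₀) * (L₀ - Rπ) / (R₀ * Rπ) - 1 with hB
  have hA0 : A ≠ 0 := by
    rw [hA]
    exact div_ne_zero (mul_ne_zero (mul_ne_zero two_ne_zero hL.ne') hLRπ) (by positivity)
  -- key: F 0 0 b 0 = A * b + B for 0 < b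
  have key : ∀ b : ℝ, 0 < b → F 0 0 b 0 = A * b + B := by
    intro b hb
    rw [hF, hA, hB]
    have h1 : R₀ + b ≠ 0 := by positivity
    have h2 : Rπ ≠ 0 := hRπ.ne'
    have h3 : R₀ ≠ 0 := hR₀.ne'
    simp only [sub_zero, add_zero, zero_mul, mul_zero]
    have e1 : R₀ - b * (R₀ / (R₀ + b)) = R₀ ^ 2 / (R₀ + b) := by
      field_simp; ring
    have e2 : L₀ - R₀ + b * (R₀ / (R₀ + b)) = ((L₀ - R₀) * R₀ + L₀ * b) / (R₀ + b) := by
      field_simp; ring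
    rw [e1, e2]
    field_simp
    ring
  -- pick b avoiding S
  have hfin : (Set.Ioo (0:ℝ) δ \ (fun b => A * b + B) ⁻¹' (S : Set ℝ)).Nonempty := by
    apply Set.Infinite.nonempty
    apply Set.Infinite.diff (Set.Ioo_infinite hδ0)
    apply Set.Finite.preimage _ S.finite_toSet
    intro x _ y _ h
    have hxy : A * x = A * y := by simpa using h
    exact mul_left_cancel₀ hA0 hxy
  obtain ⟨b, ⟨hb0, hbδ⟩, hbS⟩ := hfin
  have hbε : b < ε := lt_of_lt_of_le hbδ (min_le_left _ _)
  have hbsum : b < (R₀ + Rπ) - L₀ :=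
    lt_of_lt_of_le hbδ (le_trans (min_le_right _ _) (min_le_left _ _))
  have hbd : b < d := lt_of_lt_of_le hbδ (le_trans (min_le_right _ _) (min_le_right _ _))
  have hden : (0:ℝ) < R₀ + b := by linarith
  have hgpos : 0 < b * (R₀ / (R₀ + b)) := by positivity
  have hg : b * (R₀ / (R₀ + b)) < b := by
    have : R₀ / (R₀ + b) < 1 := (div_lt_one hden).mpr (by linarith)
    nlinarith
  refine ⟨0, 0, b, 0, ?_, ?_, ?_, ?_, ?_, ?_, ?_⟩
  · simpa using hε
  · simpa using hε
  · rw [abs_of_pos hb0]; exact hbε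
  · simpa using hε
  · rw [key b hb0]; exact hbS
  · simp only [sub_zero, zero_mul, mul_zero]
    linarith
  · simp only [sub_zero, zero_mul, mul_zero]
    rcases mul_pos_iff.mp hell₂ with ⟨h1, h2⟩ | ⟨h1, h2⟩
    · have hpos : 0 < L₀ - (R₀ - b * (R₀ / (R₀ + b))) := by linarith
      exact mul_pos hpos h2
    · have hbd' : b < R₀ - L₀ := by
        have hlt : L₀ < R₀ := by linarith
        rw [hd, if_pos hlt] at hbd; exact hbd
      have hneg : L₀ - (R₀ - b * (R₀ / (R₀ + b))) < 0 := by linarith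
      exact mul_pos_of_neg_of_neg hneg h2
end
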